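/- Suppose x : ℝ → ℝ is a 2π-periodic C² solution of x'' + f(x)x' + g(x) + n²x = e(t), where e is continuous and 2π-periodic, f, g are continuous, F(x) = ∫₀ˣ f, and F and g are bounded with finite infimum and supremum on ℝ. Let A_n = ∫₀^{2π} e(t)cos(nt) dt and B_n = ∫₀^{2π} e(t)sin(nt) dt. If F and g are non-constant, then √(A_n² + B_n²) < 2n(sup F − inf F) + 2(sup g − inf g). -/

import Mathlib

open Real MeasureTheory Filter

/-!
Choose `θ` with `A_n cos θ + B_n sin θ = √(A_n² + B_n²)`; this is `∫₀^{2π} e(t) cos(nt - θ) dt`.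
Multiply the equation by `cos(nt - θ)` and integrate by parts over a period: the terms `x''` and
`n²x` cancel, and `f(x) x' = (F ∘ x)'` turns into `n ∫ F(x(t)) sin(nt - θ) dt`, so
`√(A_n² + B_n²) = n ∫ F(x) sin(nt - θ) + ∫ g(x) cos(nt - θ)`.
For continuous `h` with values in `[m, M]`, since the sine has mean zero,
`∫₀^{2π} h sin(nt - θ) = ∫ (h - (m + M)/2) sin(nt - θ) ≤ (M - m)/2 ∫ |sin(nt - θ)| = 2(M - m)`.
When `m < M` the bound is strict: if `h` comes closer than `(M - m)/2` to the midpoint somewhere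
on the period, the estimate is strict near there because the zeros of the sine form a null set;
otherwise `h` takes only the values `m` and `M` there, so by connectedness it is constant and the
integral vanishes. This applies to `g`, which is non-constant.
-/

open Set Function

theorem Function.Periodic.intervalIntegral_comp_nat_mul_sub {h : ℝ → ℝ} {T : ℝ}
    (hh : Periodic h T) (hint : ∀ a b, IntervalIntegrable h volume a b) {n : ℕ} (hn : n ≠ 0)
    (θ : ℝ) : ∫ t in (0 : ℝ)..T, h (n * t - θ) = ∫ t in (0 : ℝ)..T, h t := by
  have hn' : (n : ℝ) ≠ 0 := Nat.cast_ne_zero.mpr hn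
  rw [intervalIntegral.integral_comp_mul_sub (f := h) hn', mul_zero, zero_sub,
    show (n : ℝ) * T - θ = -θ + (n : ℤ) • T by rw [zsmul_eq_mul]; push_cast; ring,
    hh.intervalIntegral_add_zsmul_eq _ _ hint, hh.intervalIntegral_add_eq (-θ) 0, zero_add,
    zsmul_eq_mul, smul_eq_mul, Int.cast_natCast, inv_mul_cancel_left₀ hn']

theorem integral_sin_nat_mul_sub {n : ℕ} (hn : n ≠ 0) (θ : ℝ) :
    ∫ t in (0 : ℝ)..2 * π, sin (n * t - θ) = 0 := by
  rw [sin_periodic.intervalIntegral_comp_nat_mul_sub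
    (fun _ _ => continuous_sin.intervalIntegrable _ _) hn θ]
  simp [integral_sin]

theorem integral_abs_sin_two_pi : ∫ t in (0 : ℝ)..2 * π, |sin t| = 4 := by
  have hper : Periodic (fun t => |sin t|) π := fun t => by simp [sin_add_pi]
  have hint : ∀ a b, IntervalIntegrable (fun t => |sin t|) volume a b :=
    fun _ _ => continuous_sin.abs.intervalIntegrable _ _
  have half : ∫ t in (0 : ℝ)..π, |sin t| = 2 := by
    rw [intervalIntegral.integral_congr fun t ht =>
      abs_of_nonneg (sin_nonneg_of_nonneg_of_le_pi (uIcc_of_le pi_pos.le ▸ ht).1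
        (uIcc_of_le pi_pos.le ▸ ht).2)]
    simp [integral_sin]; norm_num
  rw [two_mul, ← intervalIntegral.integral_add_adjacent_intervals (hint 0 π) (hint _ _),
    hper.intervalIntegral_add_eq π 0, zero_add, half]
  norm_num

theorem integral_abs_sin_nat_mul_sub {n : ℕ} (hn : n ≠ 0) (θ : ℝ) :
    ∫ t in (0 : ℝ)..2 * π, |sin (n * t - θ)| = 4 := by
  rw [(show Periodic (fun t => |sin t|) (2 * π) from fun t => by simp [sin_periodic t])
    |>.intervalIntegral_comp_nat_mul_sub (fun _ _ => continuous_sin.abs.intervalIntegrable _ _)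
      hn θ, integral_abs_sin_two_pi]

theorem exists_sin_mul_sub_ne_zero {V : Set ℝ} (hV : IsOpen V) (hne : V.Nonempty) {a : ℝ}
    (ha : a ≠ 0) (θ : ℝ) : ∃ t ∈ V, sin (a * t - θ) ≠ 0 := by
  by_contra! hzero
  have hsub : V ⊆ range (fun k : ℤ => (k * π + θ) / a) := fun t ht => by
    obtain ⟨k, hk⟩ := sin_eq_zero_iff.mp (hzero t ht)
    exact ⟨k, by simp only [hk]; field_simp; ring⟩
  exact (hV.measure_pos volume hne).ne'
    (measure_mono_null hsub ((countable_range _).measure_zero volume))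

theorem integral_mul_sin_nat_mul_sub_eq_zero_of_eqOn {n : ℕ} (hn : n ≠ 0) (θ : ℝ) {h : ℝ → ℝ}
    {k : ℝ} (hk : EqOn h (fun _ => k) (Icc 0 (2 * π))) :
    ∫ t in (0 : ℝ)..2 * π, h t * sin (n * t - θ) = 0 := by
  rw [intervalIntegral.integral_congr fun t ht => by
      rw [hk (uIcc_of_le two_pi_pos.le ▸ ht)],
    intervalIntegral.integral_const_mul, integral_sin_nat_mul_sub hn, mul_zero]

theorem integral_mul_sin_nat_mul_sub_lt {n : ℕ} (hn : n ≠ 0) (θ : ℝ) {h : ℝ → ℝ}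
    (hh : Continuous h) {m M : ℝ} (hmM : m < M) (hm : ∀ t, m ≤ h t) (hM : ∀ t, h t ≤ M) :
    ∫ t in (0 : ℝ)..2 * π, h t * sin (n * t - θ) < 2 * (M - m) := by
  set c := (m + M) / 2
  set d := (M - m) / 2
  have hd : 0 < d := by simp only [d]; linarith
  have hbd : ∀ t, |h t - c| ≤ d := fun t =>
    abs_le.2 ⟨by simp only [c, d]; linarith [hm t], by simp only [c, d]; linarith [hM t]⟩
  have hcentre : ∫ t in (0 : ℝ)..2 * π, h t * sin (n * t - θ)
      = ∫ t in (0 : ℝ)..2 * π, (h t - c) * sin (n * t - θ) := by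
    simp_rw [sub_mul]
    rw [intervalIntegral.integral_sub (by apply Continuous.intervalIntegrable; fun_prop)
        (by apply Continuous.intervalIntegrable; fun_prop),
      intervalIntegral.integral_const_mul, integral_sin_nat_mul_sub hn, mul_zero, sub_zero]
  have habs : ∫ t in (0 : ℝ)..2 * π, d * |sin (n * t - θ)| = 2 * (M - m) := by
    rw [intervalIntegral.integral_const_mul, integral_abs_sin_nat_mul_sub hn]
    simp only [d]; ring
  rw [hcentre]
  by_cases hlt : ∃ t₁ ∈ Icc 0 (2 * π), |h t₁ - c| < d
  · obtain ⟨t₁, ht₁, hlt₁⟩ := hlt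
    have hU : IsOpen {t | |h t - c| < d} := isOpen_lt (by fun_prop) continuous_const
    have hUne : ({t | |h t - c| < d} ∩ Ioo 0 (2 * π)).Nonempty := by
      rw [← closure_Ioo two_pi_pos.ne] at ht₁
      exact mem_closure_iff.1 ht₁ _ hU hlt₁
    obtain ⟨t₀, ⟨ht₀, ht₀I⟩, hs₀⟩ :=
      exists_sin_mul_sub_ne_zero (hU.inter isOpen_Ioo) hUne (Nat.cast_ne_zero.2 hn) θ
    rw [← habs]
    refine intervalIntegral.integral_lt_integral_of_continuousOn_of_le_of_exists_lt two_pi_pos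
      (by fun_prop) (by fun_prop) (fun t _ => ?_) ⟨t₀, Ioo_subset_Icc_self ht₀I, ?_⟩
    · calc (h t - c) * sin (n * t - θ) ≤ |h t - c| * |sin (n * t - θ)| :=
            (le_abs_self _).trans (abs_mul _ _).le
        _ ≤ d * |sin (n * t - θ)| := mul_le_mul_of_nonneg_right (hbd t) (abs_nonneg _)
    · calc (h t₀ - c) * sin (n * t₀ - θ) ≤ |h t₀ - c| * |sin (n * t₀ - θ)| :=
            (le_abs_self _).trans (abs_mul _ _).le
        _ < d * |sin (n * t₀ - θ)| := mul_lt_mul_of_pos_right ht₀ (abs_pos.2 hs₀)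
  · push Not at hlt
    have hsq : EqOn ((fun t => h t - c) ^ 2) ((fun _ => d) ^ 2) (Icc 0 (2 * π)) := fun t ht => by
      simp only [Pi.pow_apply, ← sq_abs (h t - c), le_antisymm (hbd t) (hlt t ht)]
    have hzero : ∀ k, EqOn (fun t => h t - c) (fun _ => k) (Icc 0 (2 * π)) →
        ∫ t in (0 : ℝ)..2 * π, (h t - c) * sin (n * t - θ) = 0 :=
      fun k hk => integral_mul_sin_nat_mul_sub_eq_zero_of_eqOn hn θ hk
    obtain hk | hk := isPreconnected_Icc.eq_or_eq_neg_of_sq_eq (by fun_prop) (by fun_prop) hsq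
      fun _ => hd.ne'
    · rw [hzero d hk]; linarith
    · rw [hzero (-d) hk]; linarith

theorem integral_mul_sin_nat_mul_sub_le {n : ℕ} (hn : n ≠ 0) (θ : ℝ) {h : ℝ → ℝ}
    (hh : Continuous h) {m M : ℝ} (hm : ∀ t, m ≤ h t) (hM : ∀ t, h t ≤ M) :
    ∫ t in (0 : ℝ)..2 * π, h t * sin (n * t - θ) ≤ 2 * (M - m) := by
  rcases ((hm 0).trans (hM 0)).lt_or_eq with hmM | rfl
  · exact (integral_mul_sin_nat_mul_sub_lt hn θ hh hmM hm hM).le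
  · rw [integral_mul_sin_nat_mul_sub_eq_zero_of_eqOn hn θ fun t _ => le_antisymm (hM t) (hm t)]
    simp

theorem Function.Periodic.deriv {u : ℝ → ℝ} {T : ℝ} (hu : Periodic u T) :
    Periodic (deriv u) T := fun t => by
  rw [← deriv_comp_add_const, show (fun s => u (s + T)) = u from funext hu]

theorem Function.Periodic.intervalIntegral_deriv_mul_eq_neg {u v u' v' : ℝ → ℝ} {T : ℝ}
    (hu : Periodic u T) (hv : Periodic v T) (huu' : ∀ t, HasDerivAt u (u' t) t)
    (hvv' : ∀ t, HasDerivAt v (v' t) t) (hu' : IntervalIntegrable u' volume 0 T)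
    (hv' : IntervalIntegrable v' volume 0 T) :
    ∫ t in (0 : ℝ)..T, u' t * v t = -∫ t in (0 : ℝ)..T, u t * v' t := by
  have hparts := intervalIntegral.integral_deriv_mul_eq_sub (fun t _ => huu' t)
    (fun t _ => hvv' t) hu' hv'
  have hvc : Continuous v := continuous_iff_continuousAt.2 fun t => (hvv' t).continuousAt
  have huc : Continuous u := continuous_iff_continuousAt.2 fun t => (huu' t).continuousAt
  have hend : u T * v T = u 0 * v 0 := by
    simpa only [zero_add] using congrArg₂ (· * ·) (hu 0) (hv 0)
  rw [intervalIntegral.integral_add (hu'.mul_continuousOn hvc.continuousOn)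
    (hv'.continuousOn_mul huc.continuousOn), hend, sub_self] at hparts
  linarith

theorem periodic_cos_nat_mul_sub (n : ℕ) (θ : ℝ) :
    Periodic (fun t => cos (n * t - θ)) (2 * π) := fun t => by
  simp only [show (n : ℝ) * (t + 2 * π) - θ = n * t - θ + n * (2 * π) by ring,
    cos_add_nat_mul_two_pi]

theorem periodic_sin_nat_mul_sub (n : ℕ) (θ : ℝ) :
    Periodic (fun t => sin (n * t - θ)) (2 * π) := fun t => by
  simp only [show (n : ℝ) * (t + 2 * π) - θ = n * t - θ + n * (2 * π) by ring,
    sin_add_nat_mul_two_pi]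

theorem hasDerivAt_cos_mul_sub (a θ t : ℝ) :
    HasDerivAt (fun t => cos (a * t - θ)) (-a * sin (a * t - θ)) t := by
  simpa [mul_comm] using (((hasDerivAt_id t).const_mul a).sub_const θ).cos

theorem hasDerivAt_sin_mul_sub (a θ t : ℝ) :
    HasDerivAt (fun t => sin (a * t - θ)) (a * cos (a * t - θ)) t := by
  simpa [mul_comm] using (((hasDerivAt_id t).const_mul a).sub_const θ).sin

theorem integral_deriv_mul_cos_nat_mul_sub (n : ℕ) (θ : ℝ) {G G' : ℝ → ℝ}
    (hG : Periodic G (2 * π)) (hGG' : ∀ t, HasDerivAt G (G' t) t)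
    (hG' : IntervalIntegrable G' volume 0 (2 * π)) :
    ∫ t in (0 : ℝ)..2 * π, G' t * cos (n * t - θ)
      = n * ∫ t in (0 : ℝ)..2 * π, G t * sin (n * t - θ) := by
  rw [hG.intervalIntegral_deriv_mul_eq_neg (periodic_cos_nat_mul_sub n θ) hGG'
      (hasDerivAt_cos_mul_sub n θ) hG' (by apply Continuous.intervalIntegrable; fun_prop),
    ← intervalIntegral.integral_const_mul, ← intervalIntegral.integral_neg]
  congr 1 with t
  ring

theorem integral_deriv_mul_sin_nat_mul_sub (n : ℕ) (θ : ℝ) {G G' : ℝ → ℝ}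
    (hG : Periodic G (2 * π)) (hGG' : ∀ t, HasDerivAt G (G' t) t)
    (hG' : IntervalIntegrable G' volume 0 (2 * π)) :
    ∫ t in (0 : ℝ)..2 * π, G' t * sin (n * t - θ)
      = -n * ∫ t in (0 : ℝ)..2 * π, G t * cos (n * t - θ) := by
  rw [hG.intervalIntegral_deriv_mul_eq_neg (periodic_sin_nat_mul_sub n θ) hGG'
      (hasDerivAt_sin_mul_sub n θ) hG' (by apply Continuous.intervalIntegrable; fun_prop),
    ← intervalIntegral.integral_const_mul, ← intervalIntegral.integral_neg]
  congr 1 with t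
  ring

theorem integral_lienard_mul_cos_nat_mul_sub (n : ℕ) (θ : ℝ) {x f F k : ℝ → ℝ}
    (hx : ContDiff ℝ 2 x) (hxper : Periodic x (2 * π)) (hf : Continuous f)
    (hF : ∀ y, HasDerivAt F (f y) y) (hk : Continuous k) :
    ∫ t in (0 : ℝ)..2 * π,
        (deriv (deriv x) t + f (x t) * deriv x t + k t + n ^ 2 * x t) * cos (n * t - θ)
      = n * (∫ t in (0 : ℝ)..2 * π, F (x t) * sin (n * t - θ))
        + ∫ t in (0 : ℝ)..2 * π, k t * cos (n * t - θ) := by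
  have hx1 : ContDiff ℝ 1 (deriv x) := hx.deriv'
  have hdx : ∀ t, HasDerivAt x (deriv x t) t :=
    fun t => (hx.differentiable (by norm_num) t).hasDerivAt
  have hddx : ∀ t, HasDerivAt (deriv x) (deriv (deriv x) t) t :=
    fun t => (hx1.differentiable one_ne_zero t).hasDerivAt
  have hcx := hx.continuous
  have hcx' := hx.continuous_deriv (by norm_num)
  have hcx'' := hx1.continuous_deriv le_rfl
  have hint {φ : ℝ → ℝ} (hφ : Continuous φ) : IntervalIntegrable φ volume 0 (2 * π) :=
    hφ.intervalIntegrable _ _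
  have hinertia : ∫ t in (0 : ℝ)..2 * π, deriv (deriv x) t * cos (n * t - θ)
      = -n ^ 2 * ∫ t in (0 : ℝ)..2 * π, x t * cos (n * t - θ) := by
    rw [integral_deriv_mul_cos_nat_mul_sub n θ hxper.deriv hddx (hint hcx''),
      integral_deriv_mul_sin_nat_mul_sub n θ hxper hdx (hint hcx')]
    ring
  have hdamping : ∫ t in (0 : ℝ)..2 * π, f (x t) * deriv x t * cos (n * t - θ)
      = n * ∫ t in (0 : ℝ)..2 * π, F (x t) * sin (n * t - θ) :=
    integral_deriv_mul_cos_nat_mul_sub n θ (G := F ∘ x) (fun t => by simp [hxper t])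
      (fun t => (hF (x t)).comp t (hdx t)) (hint (by fun_prop))
  simp_rw [add_mul]
  rw [intervalIntegral.integral_add (hint (by fun_prop)) (hint (by fun_prop)),
    intervalIntegral.integral_add (hint (by fun_prop)) (hint (by fun_prop)),
    intervalIntegral.integral_add (hint (by fun_prop)) (hint (by fun_prop))]
  simp_rw [mul_assoc (n ^ 2 : ℝ)]
  rw [intervalIntegral.integral_const_mul, hinertia, hdamping]
  ring

theorem exists_mul_cos_add_mul_sin_eq_sqrt (A B : ℝ) :
    ∃ θ, A * cos θ + B * sin θ = √(A ^ 2 + B ^ 2) := by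
  let z : ℂ := ⟨A, B⟩
  refine ⟨z.arg, ?_⟩
  have hcos : ‖z‖ * cos z.arg = A := Complex.norm_mul_cos_arg z
  have hsin : ‖z‖ * sin z.arg = B := Complex.norm_mul_sin_arg z
  rw [← Complex.norm_eq_sqrt_sq_add_sq z, ← hcos, ← hsin]
  linear_combination ‖z‖ * sin_sq_add_cos_sq z.arg

theorem integral_mul_cos_mul_sub {e : ℝ → ℝ} {a b : ℝ} (he : IntervalIntegrable e volume a b)
    (c θ : ℝ) :
    ∫ t in a..b, e t * cos (c * t - θ)
      = (∫ t in a..b, e t * cos (c * t)) * cos θ + (∫ t in a..b, e t * sin (c * t)) * sin θ := by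
  simp_rw [cos_sub, mul_add, ← intervalIntegral.integral_mul_const]
  rw [← intervalIntegral.integral_add ((he.mul_continuousOn (by fun_prop)).mul_const _)
    ((he.mul_continuousOn (by fun_prop)).mul_const _)]
  congr 1 with t
  ring

theorem sInf_range_lt_sSup_range {α : Type*} {g : α → ℝ} (hA : BddAbove (range g))
    (hB : BddBelow (range g)) {a b : α} (hab : g a ≠ g b) : sInf (range g) < sSup (range g) := by
  rcases hab.lt_or_gt with h | h
  · exact ((csInf_le hB ⟨a, rfl⟩).trans_lt h).trans_le (le_csSup hA ⟨b, rfl⟩)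
  · exact ((csInf_le hB ⟨b, rfl⟩).trans_lt h).trans_le (le_csSup hA ⟨a, rfl⟩)

theorem stmt_7_general (n : ℕ) (hn : 1 ≤ n)
    (e f g : ℝ → ℝ) (he : Continuous e)
    (hf : Continuous f) (hg : Continuous g)
    (F : ℝ → ℝ) (hF : ∀ s, F s = ∫ u in (0:ℝ)..s, f u)
    (hFbdd : BddAbove (Set.range F) ∧ BddBelow (Set.range F))
    (hgbdd : BddAbove (Set.range g) ∧ BddBelow (Set.range g))
    (hgnc : ∃ a b, g a ≠ g b)
    (x : ℝ → ℝ) (hx : ContDiff ℝ 2 x) (hxper : Function.Periodic x (2 * π))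
    (heq : ∀ t, deriv (deriv x) t + f (x t) * deriv x t + g (x t) + n ^ 2 * x t = e t)
    (An Bn : ℝ)
    (hA : An = ∫ t in (0:ℝ)..(2 * π), e t * Real.cos (n * t))
    (hB : Bn = ∫ t in (0:ℝ)..(2 * π), e t * Real.sin (n * t)) :
    Real.sqrt (An ^ 2 + Bn ^ 2)
      < 2 * n * (sSup (Set.range F) - sInf (Set.range F))
        + 2 * (sSup (Set.range g) - sInf (Set.range g)) := by
  have hn0 : n ≠ 0 := Nat.one_le_iff_ne_zero.mp hn
  have hFf : ∀ y, HasDerivAt F (f y) y := by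
    rw [funext hF]
    exact fun y => (hf.integral_hasStrictDerivAt 0 y).hasDerivAt
  obtain ⟨θ, hθ⟩ := exists_mul_cos_add_mul_sin_eq_sqrt An Bn
  have hFx := integral_mul_sin_nat_mul_sub_le hn0 θ
    ((continuous_iff_continuousAt.2 fun y => (hFf y).continuousAt).comp hx.continuous)
    (fun t => csInf_le hFbdd.2 ⟨x t, rfl⟩) (fun t => le_csSup hFbdd.1 ⟨x t, rfl⟩)
  obtain ⟨a, b, hab⟩ := hgnc
  have hgx := integral_mul_sin_nat_mul_sub_lt hn0 (θ - π / 2) (hg.comp hx.continuous)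
    (sInf_range_lt_sSup_range hgbdd.1 hgbdd.2 hab)
    (fun t => csInf_le hgbdd.2 ⟨x t, rfl⟩) (fun t => le_csSup hgbdd.1 ⟨x t, rfl⟩)
  have hshift : ∀ t : ℝ, sin (n * t - (θ - π / 2)) = cos (n * t - θ) := fun t => by
    rw [← sin_add_pi_div_two]; ring_nf
  simp only [Function.comp_apply, hshift] at hFx hgx
  rw [← hθ, hA, hB, ← integral_mul_cos_mul_sub (he.intervalIntegrable _ _)]
  simp_rw [← heq]
  rw [integral_lienard_mul_cos_nat_mul_sub n θ hx hxper hf hFf (k := fun t => g (x t))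
    (hg.comp hx.continuous)]
  have := mul_le_mul_of_nonneg_left hFx n.cast_nonneg
  linarith

theorem stmt_7 (n : ℕ) (hn : 1 ≤ n)
    (e f g : ℝ → ℝ) (he : Continuous e) (heper : Function.Periodic e (2 * π))
    (hf : Continuous f) (hg : Continuous g)
    (F : ℝ → ℝ) (hF : ∀ s, F s = ∫ u in (0:ℝ)..s, f u)
    (hFbdd : BddAbove (Set.range F) ∧ BddBelow (Set.range F))
    (hgbdd : BddAbove (Set.range g) ∧ BddBelow (Set.range g))
    (hFnc : ∃ a b, F a ≠ F b) (hgnc : ∃ a b, g a ≠ g b)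
    (x : ℝ → ℝ) (hx : ContDiff ℝ 2 x) (hxper : Function.Periodic x (2 * π))
    (heq : ∀ t, deriv (deriv x) t + f (x t) * deriv x t + g (x t) + n ^ 2 * x t = e t)
    (An Bn : ℝ)
    (hA : An = ∫ t in (0:ℝ)..(2 * π), e t * Real.cos (n * t))
    (hB : Bn = ∫ t in (0:ℝ)..(2 * π), e t * Real.sin (n * t)) :
    Real.sqrt (An ^ 2 + Bn ^ 2)
      < 2 * n * (sSup (Set.range F) - sInf (Set.range F))
        + 2 * (sSup (Set.range g) - sInf (Set.range g)) :=
  stmt_7_general n hn e f g he hf hg F hF hFbdd hgbdd hgnc x hx hxper heq An Bn hA hB
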